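/- Let (X, π) be a weighted n-partite simplicial complex and let I, J ⊆ [n] be disjoint with I ∪ J = [n] and |I| ≥ 2. Fix i ∈ I and let σ = max over x ∈ Ω[{i}] of σ₂(C_x^{(I∖{i})→J}). Then σ₂(C_∅^{I→J})² ≤ 1 − (1 − σ²)·(1 − σ₂(C_∅^{{i}→J})²). -/

import Mathlib

open Finset
open scoped Classical

noncomputable section

namespace PaperFormal

/-- A weighted `n`-partite simplicial complex: a nonempty finite set `Ω` of `n`-tuples
(the top faces, each tuple picking one element from each side `U i`) together with a
full-support probability distribution `π` on it. -/
structure WPC (n : ℕ) (U : Fin n → Type*) [∀ i, Fintype (U i)] [∀ i, DecidableEq (U i)] where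
  Ω : Finset (∀ i, U i)
  nonempty : Ω.Nonempty
  π : (∀ i, U i) → ℝ
  nonneg : ∀ ω, 0 ≤ π ω
  support : ∀ ω, 0 < π ω ↔ ω ∈ Ω
  sum_one : ∑ ω : ∀ i, U i, π ω = 1

/-- Partial assignments to the coordinates in `S`. -/
abbrev PAssign {n : ℕ} (U : Fin n → Type*) (S : Finset (Fin n)) : Type _ :=
  ∀ i : {x : Fin n // x ∈ S}, U i.1

variable {n : ℕ} {U : Fin n → Type*} [∀ i, Fintype (U i)] [∀ i, DecidableEq (U i)]

/-- Restriction of a tuple to the coordinates in `S`. -/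
def restr (S : Finset (Fin n)) (ω : ∀ i, U i) : PAssign U S := fun i => ω i.1

/-- The unique assignment to the empty set of coordinates. -/
def emptyA : PAssign U (∅ : Finset (Fin n)) := fun i => absurd i.2 (Finset.notMem_empty i.1)

/-- Probability of the event `E` under `π`. -/
def pr (X : WPC n U) (E : (∀ i, U i) → Prop) : ℝ :=
  ∑ ω : ∀ i, U i, if E ω then X.π ω else 0

lemma pr_congr (X : WPC n U) {E F : (∀ i, U i) → Prop} (h : ∀ ω, E ω ↔ F ω) :
    pr X E = pr X F :=
  Finset.sum_congr rfl fun ω _ => if_congr (h ω) rfl rfl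

/-- The `S`-marginal of `π`, evaluated at the partial assignment `α`. -/
def marg (X : WPC n U) (S : Finset (Fin n)) (α : PAssign U S) : ℝ :=
  pr X fun ω => restr S ω = α

/-- The pinned marginal `π_T^{(α)}`: the probability that the coordinates in `T` agree
with `β`, conditioned on the coordinates in `S` agreeing with `α`. -/
def cmarg (X : WPC n U) {S T : Finset (Fin n)} (α : PAssign U S) (β : PAssign U T) : ℝ :=
  pr X (fun ω => restr S ω = α ∧ restr T ω = β) / marg X S α

/-- The colored random walk `C_α^{I → J}`: entry `(τI, τJ)` is
`Pr[ω_J = τJ | ω_I = τI, ω_S = α]`. -/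
def Cwalk (X : WPC n U) (S I J : Finset (Fin n)) (α : PAssign U S)
    (τI : PAssign U I) (τJ : PAssign U J) : ℝ :=
  pr X (fun ω => restr S ω = α ∧ restr I ω = τI ∧ restr J ω = τJ) /
    pr X (fun ω => restr S ω = α ∧ restr I ω = τI)

/-- The second largest singular value of a row-stochastic matrix `M` satisfying
`μA M = μB`, with respect to the inner products weighted by `μA` and `μB`, via its
variational characterization
`σ₂(M) = sup { ⟨f, M g⟩_{μA} : ⟨f,1⟩_{μA} = ⟨g,1⟩_{μB} = 0, ‖f‖_{μA} = ‖g‖_{μB} = 1 }`. -/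
def sigma2 {A B : Type*} [Fintype A] [Fintype B]
    (μA : A → ℝ) (μB : B → ℝ) (M : A → B → ℝ) : ℝ :=
  sSup { r : ℝ | ∃ f : A → ℝ, ∃ g : B → ℝ,
    (∑ a, μA a * f a) = 0 ∧ (∑ b, μB b * g b) = 0 ∧
    (∑ a, μA a * f a ^ 2) = 1 ∧ (∑ b, μB b * g b ^ 2) = 1 ∧
    r = ∑ a, μA a * f a * ∑ b, M a b * g b }

/-- The second largest singular value `σ₂(C_α^{I → J})`, with respect to the inner
products weighted by the pinned marginals `π_I^{(α)}` and `π_J^{(α)}`. -/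
def sigma2C (X : WPC n U) (S I J : Finset (Fin n)) (α : PAssign U S) : ℝ :=
  sigma2 (fun τI : PAssign U I => cmarg X α τI) (fun τJ : PAssign U J => cmarg X α τJ)
    (Cwalk X S I J α)

/-- `ε^{I → J}`: the maximum of `σ₂(C_α^{I → J})` over all partial assignments `α`
to the coordinates outside `I ∪ J` (realizable on `Ω`). -/
def epsIJ (X : WPC n U) (I J : Finset (Fin n)) : ℝ :=
  sSup { r : ℝ | ∃ α : PAssign U (I ∪ J)ᶜ,
    0 < marg X (I ∪ J)ᶜ α ∧ r = sigma2C X (I ∪ J)ᶜ I J α }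

/-- `π` is `(ε 0, …, ε (n-2))`-product: for every realizable pinning `α` of a set `S` of at
most `n - 2` coordinates, and all distinct `i, j ∉ S`, `σ₂(C_α^{i → j}) ≤ ε |S|`. -/
def isProduct (X : WPC n U) (ε : ℕ → ℝ) : Prop :=
  ∀ S : Finset (Fin n), S.card ≤ n - 2 → ∀ α : PAssign U S, 0 < marg X S α →
    ∀ i j : Fin n, i ∉ S → j ∉ S → i ≠ j → sigma2C X S {i} {j} α ≤ ε S.card

/-- The update operator `Q_i`: resample the `i`-th coordinate according to `π`,
conditionally on all the other coordinates. -/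
def Qmat (X : WPC n U) (i : Fin n) : Matrix (∀ i, U i) (∀ i, U i) ℝ :=
  Matrix.of fun ω ω' =>
    pr X (fun τ => τ = ω' ∧ restr {i}ᶜ τ = restr {i}ᶜ ω) /
      pr X (fun τ => restr {i}ᶜ τ = restr {i}ᶜ ω)

/-- The sequential sweep `P_seq^{(s)} = Q_{s 0} Q_{s 1} ⋯ Q_{s (n-1)}`. -/
def Psq (X : WPC n U) (s : Equiv.Perm (Fin n)) : Matrix (∀ i, U i) (∀ i, U i) ℝ :=
  (List.ofFn fun j : Fin n => Qmat X (s j)).prod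

/-- The second largest singular value of the sequential sweep, with respect to the
inner product weighted by its stationary distribution `π`. -/
def sigma2P (X : WPC n U) (s : Equiv.Perm (Fin n)) : ℝ :=
  sigma2 X.π X.π fun ω ω' => Psq X s ω ω'

/-- The link graph `G_α` of a pinning `α` of the coordinates in `S`: vertices are pairs
`(i, x)` with `i ∉ S`, and `(i,x)`, `(j,y)` are adjacent when `i ≠ j` and the event
`{ω_i = x, ω_j = y, ω_S = α}` has positive probability. -/
def linkGraph (X : WPC n U) (S : Finset (Fin n)) (α : PAssign U S) :
    SimpleGraph ((i : Fin n) × U i) where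
  Adj v w := v.1 ≠ w.1 ∧ v.1 ∉ S ∧ w.1 ∉ S ∧
    0 < pr X fun ω => restr S ω = α ∧ ω v.1 = v.2 ∧ ω w.1 = w.2
  symm := by
    refine ⟨?_⟩
    rintro v w ⟨h1, h2, h3, h4⟩
    refine ⟨h1.symm, h3, h2, ?_⟩
    have e : pr X (fun ω => restr S ω = α ∧ ω w.1 = w.2 ∧ ω v.1 = v.2)
        = pr X (fun ω => restr S ω = α ∧ ω v.1 = v.2 ∧ ω w.1 = w.2) :=
      pr_congr X fun ω => by tauto
    rw [e]; exact h4
  loopless := by refine ⟨?_⟩; rintro v ⟨h1, -⟩; exact h1 rfl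

/-- `(X, π)` is link-connected: in every link graph (of a realizable pinning of at most
`n - 2` coordinates), every two valid vertices are connected by a path. -/
def linkConnected (X : WPC n U) : Prop :=
  ∀ S : Finset (Fin n), S.card ≤ n - 2 → ∀ α : PAssign U S, 0 < marg X S α →
    ∀ v w : (i : Fin n) × U i, v.1 ∉ S → w.1 ∉ S →
      0 < pr X (fun ω => restr S ω = α ∧ ω v.1 = v.2) →
      0 < pr X (fun ω => restr S ω = α ∧ ω w.1 = w.2) →
      (linkGraph X S α).Reachable v w

/-- The stationary measure of the random walk on the link graph `G_α`. -/
def linkMeas (X : WPC n U) (S : Finset (Fin n)) (α : PAssign U S) :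
    (i : Fin n) × U i → ℝ :=
  fun v => if v.1 ∈ S then 0 else
    (1 / ((n : ℝ) - (S.card : ℝ))) *
      (pr X (fun ω => restr S ω = α ∧ ω v.1 = v.2) / marg X S α)

/-- The random walk matrix `M_α` of the link graph `G_α`. -/
def linkWalk (X : WPC n U) (S : Finset (Fin n)) (α : PAssign U S) :
    (i : Fin n) × U i → (i : Fin n) × U i → ℝ :=
  fun v w =>
    if v.1 = w.1 ∨ v.1 ∈ S ∨ w.1 ∈ S then 0 else
      (1 / ((n : ℝ) - (S.card : ℝ) - 1)) *
        (pr X (fun ω => restr S ω = α ∧ ω v.1 = v.2 ∧ ω w.1 = w.2) /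
          pr X (fun ω => restr S ω = α ∧ ω v.1 = v.2))

/-- The second largest eigenvalue of a random walk matrix `M`, self-adjoint with respect
to the probability measure `μ`, via its variational characterization. -/
def lambda2 {A : Type*} [Fintype A] (μ : A → ℝ) (M : A → A → ℝ) : ℝ :=
  sSup { r : ℝ | ∃ f : A → ℝ,
    (∑ a, μ a * f a) = 0 ∧ (∑ a, μ a * f a ^ 2) = 1 ∧
    r = ∑ a, μ a * f a * ∑ b, M a b * f b }

/-- `(X, π)` is a `(γ 0, …, γ (n-2))`-local spectral expander:
`λ₂(M_α) ≤ γ |S|` for every realizable pinning `α` of at most `n - 2` coordinates. -/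
def isLocalExpander (X : WPC n U) (γ : ℕ → ℝ) : Prop :=
  ∀ S : Finset (Fin n), S.card ≤ n - 2 → ∀ α : PAssign U S, 0 < marg X S α →
    lambda2 (linkMeas X S α) (linkWalk X S α) ≤ γ S.card

/-- Kullback–Leibler divergence `D(μ ‖ ν) = Σ_a μ(a) log (μ(a) / ν(a))`. -/
def KL {A : Type*} [Fintype A] (μ ν : A → ℝ) : ℝ :=
  ∑ a, μ a * Real.log (μ a / ν a)

/-- `μ` is a probability distribution supported on `{a | P a}`. -/
def distOn {A : Type*} [Fintype A] (P : A → Prop) (μ : A → ℝ) : Prop :=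
  (∀ a, 0 ≤ μ a) ∧ (∑ a, μ a) = 1 ∧ ∀ a, ¬ P a → μ a = 0

/-- The `(I, J)` entropy contraction parameter `η^{I → J} = 1 - κ^{I → J}`, where
`κ^{I → J}` is the supremum of `D(μ C_α^{I→J} ‖ π_J^{(α)}) / D(μ ‖ π_I^{(α)})` over all
realizable pinnings `α` of the coordinates outside `I ∪ J` and all distributions `μ` on
the assignments of `I` compatible with `α`. -/
def etaIJ (X : WPC n U) (I J : Finset (Fin n)) : ℝ :=
  1 - sSup { r : ℝ | ∃ α : PAssign U (I ∪ J)ᶜ, 0 < marg X (I ∪ J)ᶜ α ∧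
    ∃ μ : PAssign U I → ℝ,
      distOn (fun τ => 0 < pr X fun ω => restr (I ∪ J)ᶜ ω = α ∧ restr I ω = τ) μ ∧
      KL μ (fun τ : PAssign U I => cmarg X α τ) ≠ 0 ∧
      r = KL (fun τJ : PAssign U J => ∑ τI : PAssign U I, μ τI * Cwalk X (I ∪ J)ᶜ I J α τI τJ)
            (fun τJ : PAssign U J => cmarg X α τJ) /
          KL μ (fun τ : PAssign U I => cmarg X α τ) }

/-- The entropy contraction factor `EC(M) = 1 - sup_μ D(μ M ‖ π) / D(μ ‖ π)` of a random
walk matrix `M` with stationary distribution `π`. -/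
def EC (X : WPC n U) (M : Matrix (∀ i, U i) (∀ i, U i) ℝ) : ℝ :=
  1 - sSup { r : ℝ | ∃ μ : (∀ i, U i) → ℝ, distOn (fun ω => ω ∈ X.Ω) μ ∧
    KL μ X.π ≠ 0 ∧ r = KL (Matrix.vecMul μ M) X.π / KL μ X.π }

/-- The `π`-weighted inner product on `ℝ^Ω`. -/
def ip (X : WPC n U) (f g : {ω // ω ∈ X.Ω} → ℝ) : ℝ :=
  ∑ ω : {ω // ω ∈ X.Ω}, X.π ω.1 * f ω * g ω

/-- The indicator vector `u_α ∈ ℝ^Ω` of the partial assignment `α` to the coordinates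
outside `T`. -/
def uvec (X : WPC n U) (T : Finset (Fin n)) (α : PAssign U Tᶜ) : {ω // ω ∈ X.Ω} → ℝ :=
  fun ω => if restr Tᶜ ω.1 = α then 1 else 0

/-- The subspace `U_T = span { u_α : α an assignment to the coordinates outside T }`. -/
def Uspan (X : WPC n U) (T : Finset (Fin n)) : Submodule ℝ ({ω // ω ∈ X.Ω} → ℝ) :=
  Submodule.span ℝ { f | ∃ α : PAssign U Tᶜ, f = uvec X T α }

/-- The subspace of functions on `Ω` depending only on the coordinates outside `T`. -/
def Uinv (X : WPC n U) (T : Finset (Fin n)) : Submodule ℝ ({ω // ω ∈ X.Ω} → ℝ) where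
  carrier := { f | ∀ ω ω' : {ω // ω ∈ X.Ω}, restr Tᶜ ω.1 = restr Tᶜ ω'.1 → f ω = f ω' }
  add_mem' := by
    intro f g hf hg ω ω' h
    simp only [Pi.add_apply, hf ω ω' h, hg ω ω' h]
  zero_mem' := by intro ω ω' h; rfl
  smul_mem' := by
    intro c f hf ω ω' h
    simp only [Pi.smul_apply, hf ω ω' h]

/-- The orthogonal complement (with respect to `⟨·,·⟩_π`) of a subspace, as a set. -/
def orthC (X : WPC n U) (W : Submodule ℝ ({ω // ω ∈ X.Ω} → ℝ)) :
    Set ({ω // ω ∈ X.Ω} → ℝ) :=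
  { f | ∀ g ∈ W, ip X f g = 0 }

/-- The cosine of the angle between two subspaces of `ℝ^Ω`:
`cos(A,B) = sup { ⟨u,v⟩_π : u ∈ A ∩ (A ⊓ B)ᗮ, v ∈ B ∩ (A ⊓ B)ᗮ, ‖u‖_π = ‖v‖_π = 1 }`. -/
def cosAngle (X : WPC n U) (A B : Submodule ℝ ({ω // ω ∈ X.Ω} → ℝ)) : ℝ :=
  sSup { r : ℝ | ∃ u, u ∈ A ∧ u ∈ orthC X (A ⊓ B) ∧
    ∃ v, v ∈ B ∧ v ∈ orthC X (A ⊓ B) ∧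
    ip X u u = 1 ∧ ip X v v = 1 ∧ r = ip X u v }

/-- The update operator `Q_i` as an operator on `ℝ^Ω`. -/
def Qop (X : WPC n U) (i : Fin n) (f : {ω // ω ∈ X.Ω} → ℝ) : {ω // ω ∈ X.Ω} → ℝ :=
  fun ω => ∑ ω' : {ω // ω ∈ X.Ω}, Qmat X i ω.1 ω'.1 * f ω'

/-- Concatenation of partial assignments on disjoint coordinate sets. -/
def joinAssign {S T : Finset (Fin n)} (β : PAssign U S) (α : PAssign U T) :
    PAssign U (S ∪ T) :=
  fun i => if h : i.1 ∈ S then β ⟨i.1, h⟩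
    else α ⟨i.1, (Finset.mem_union.mp i.2).resolve_left h⟩

/-- The `S`-marginal of a (not necessarily normalized) distribution `ν` on tuples. -/
def distMarg (ν : (∀ i, U i) → ℝ) (S : Finset (Fin n)) (a : PAssign U S) : ℝ :=
  ∑ ω : ∀ i, U i, if restr S ω = a then ν ω else 0

/-- The distribution `ν` conditioned on the `i`-th coordinate being `x`. -/
def condAt (ν : (∀ i, U i) → ℝ) (i : Fin n) (x : U i) : (∀ i, U i) → ℝ :=
  fun ω => if ω i = x then ν ω / (∑ ω' : ∀ i, U i, if ω' i = x then ν ω' else 0) else 0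

/-- The influence matrix `Inf_α` of the pinning `α` of the coordinates in `S`:
`Inf_α((i,x),(j,y)) = Pr[ω_j = y | ω_i = x, ω_S = α] - Pr[ω_j = y | ω_S = α]`
for `i ≠ j` outside `S`, and `0` otherwise. -/
def InfMat (X : WPC n U) (S : Finset (Fin n)) (α : PAssign U S) :
    Matrix ((i : Fin n) × U i) ((i : Fin n) × U i) ℝ :=
  Matrix.of fun v w =>
    if v.1 = w.1 ∨ v.1 ∈ S ∨ w.1 ∈ S then 0 else
      pr X (fun ω => restr S ω = α ∧ ω v.1 = v.2 ∧ ω w.1 = w.2) /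
          pr X (fun ω => restr S ω = α ∧ ω v.1 = v.2) -
        pr X (fun ω => restr S ω = α ∧ ω w.1 = w.2) / marg X S α

/-- `π` is `(c 0, …, c (n-2))`-spectrally independent: every (real) eigenvalue of the
influence matrix of a realizable pinning of at most `n - 2` coordinates is at most
`c |S|`. -/
def spectrallyIndependent (X : WPC n U) (c : ℕ → ℝ) : Prop :=
  ∀ S : Finset (Fin n), S.card ≤ n - 2 → ∀ α : PAssign U S, 0 < marg X S α →
    ∀ r : ℝ,
      (∃ v : ((i : Fin n) × U i) → ℝ, v ≠ 0 ∧ (InfMat X S α).mulVec v = r • v) →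
      r ≤ c S.card

end PaperFormal

namespace PaperFormal

variable {n : ℕ} {U : Fin n → Type*} [∀ i, Fintype (U i)] [∀ i, DecidableEq (U i)]

/-!
Condition on the colour `i`. For test functions `f(ω_I)`, `g(ω_J)` of unit variance, with
`h(x) = E[f | ω_i = x]` and `m(x) = E[g | ω_i = x]`, the law of total covariance splits `E[f g]`
into `E[Cov(f, g | ω_i)] + E[h m]`. Given `ω_i = x`, `f` is a function of `ω_{I∖i}`, so the first
term is at most `σ E[sd(f | ω_i) sd(g | ω_i)] ≤ σ √(1 - ‖h‖²) √(1 - ‖m‖²)`, and the second is at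
most `‖h‖ ‖m‖`. Moreover `‖m‖² = E[m(ω_i) g(ω_J)] ≤ σ₂(C_∅^{i→J}) ‖m‖`. Cauchy–Schwarz in `ℝ²`
then gives `E[f g]² ≤ ‖m‖² + σ² (1 - ‖m‖²) ≤ 1 - (1 - σ²)(1 - σ₂(C_∅^{i→J})²)`.
-/

theorem sqrt_mul_sqrt_add_mul_le {a b σ s : ℝ} (ha0 : 0 ≤ a) (ha1 : a ≤ 1) (hb0 : 0 ≤ b)
    (hb1 : b ≤ 1) (hσ0 : 0 ≤ σ) (hσ1 : σ ≤ 1) (hbs : b ≤ s ^ 2) :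
    √a * √b + σ * (√(1 - a) * √(1 - b)) ≤ √(1 - (1 - σ ^ 2) * (1 - s ^ 2)) := by
  apply Real.le_sqrt_of_sq_le
  have hA := Real.sq_sqrt ha0
  have hB := Real.sq_sqrt hb0
  have hC := Real.sq_sqrt (sub_nonneg.2 ha1)
  have hD := Real.sq_sqrt (sub_nonneg.2 hb1)
  have hσ2 : σ ^ 2 ≤ 1 := pow_le_one₀ hσ0 hσ1
  calc (√a * √b + σ * (√(1 - a) * √(1 - b))) ^ 2
      = (√a ^ 2 + √(1 - a) ^ 2) * (√b ^ 2 + σ ^ 2 * √(1 - b) ^ 2) -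
          (√a * σ * √(1 - b) - √(1 - a) * √b) ^ 2 := by ring
    _ ≤ (√a ^ 2 + √(1 - a) ^ 2) * (√b ^ 2 + σ ^ 2 * √(1 - b) ^ 2) :=
        sub_le_self _ (sq_nonneg _)
    _ = b + σ ^ 2 * (1 - b) := by rw [hA, hB, hC, hD]; ring
    _ ≤ 1 - (1 - σ ^ 2) * (1 - s ^ 2) := by
        nlinarith [mul_le_mul_of_nonneg_left hbs (sub_nonneg.2 hσ2)]

section WeightedSums

variable {ι K : Type*}

def fiberWeight (w : ι → ℝ) (κ : ι → K) (k : K) (a : ι) : ℝ := if κ a = k then w a else 0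

theorem fiberWeight_nonneg {w : ι → ℝ} (hw : ∀ a, 0 ≤ w a) (κ : ι → K) (k : K) (a : ι) :
    0 ≤ fiberWeight w κ k a := by
  unfold fiberWeight; split_ifs <;> simp [hw a]

theorem fiberWeight_mul_congr {w : ι → ℝ} {κ : ι → K} {k : K} {a : ι} {x y : ℝ}
    (h : κ a = k → x = y) : fiberWeight w κ k a * x = fiberWeight w κ k a * y := by
  unfold fiberWeight; split_ifs with hk <;> simp [h, hk]

variable [Fintype ι]

theorem sum_mul_mul_le_sqrt_mul_sqrt {w : ι → ℝ} (hw : ∀ a, 0 ≤ w a) (F G : ι → ℝ) :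
    ∑ a, w a * (F a * G a) ≤ √(∑ a, w a * F a ^ 2) * √(∑ a, w a * G a ^ 2) := by
  have hF : ∀ a ∈ univ, 0 ≤ w a * F a ^ 2 := fun a _ => mul_nonneg (hw a) (sq_nonneg _)
  have hG : ∀ a ∈ univ, 0 ≤ w a * G a ^ 2 := fun a _ => mul_nonneg (hw a) (sq_nonneg _)
  refine (Real.le_sqrt_of_sq_le <| sum_sq_le_sum_mul_sum_of_sq_le_mul _ hF hG
    fun a _ => le_of_eq (by ring)).trans_eq ?_
  exact Real.sqrt_mul (sum_nonneg hF) _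

theorem sum_mul_eq_zero_of_sum_eq_zero {w : ι → ℝ} (hw : ∀ a, 0 ≤ w a) (h : ∑ a, w a = 0)
    (F : ι → ℝ) : ∑ a, w a * F a = 0 := by
  have hw0 := (sum_eq_zero_iff_of_nonneg fun a _ => hw a).1 h
  exact sum_eq_zero fun a ha => by rw [hw0 a ha, zero_mul]

def wmean (w F : ι → ℝ) : ℝ := (∑ a, w a * F a) / ∑ a, w a

theorem sum_mul_wmean {w : ι → ℝ} (hw : ∀ a, 0 ≤ w a) (F : ι → ℝ) :
    (∑ a, w a) * wmean w F = ∑ a, w a * F a := by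
  rcases eq_or_ne (∑ a, w a) 0 with h | h
  · rw [h, zero_mul, sum_mul_eq_zero_of_sum_eq_zero hw h]
  · exact mul_div_cancel₀ _ h

theorem wmean_eq_zero {w F : ι → ℝ} (h : ∑ a, w a * F a = 0) : wmean w F = 0 := by
  simp [wmean, h]

theorem sum_mul_sub_wmean {w : ι → ℝ} (hw : ∀ a, 0 ≤ w a) (F : ι → ℝ) :
    ∑ a, w a * (F a - wmean w F) = 0 := by
  simp only [mul_sub, sum_sub_distrib, ← sum_mul, ← sum_mul_wmean hw F, sub_self]

def wcov (w F G : ι → ℝ) : ℝ := ∑ a, w a * ((F a - wmean w F) * (G a - wmean w G))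

theorem wcov_self (w F : ι → ℝ) : wcov w F F = ∑ a, w a * (F a - wmean w F) ^ 2 := by
  simp only [wcov, sq]

theorem wcov_self_nonneg {w : ι → ℝ} (hw : ∀ a, 0 ≤ w a) (F : ι → ℝ) : 0 ≤ wcov w F F := by
  rw [wcov_self]; exact sum_nonneg fun a _ => mul_nonneg (hw a) (sq_nonneg _)

theorem sum_pos_of_wcov_pos {w : ι → ℝ} (hw : ∀ a, 0 ≤ w a) {F : ι → ℝ} (h : 0 < wcov w F F) :
    0 < ∑ a, w a := by
  refine (sum_nonneg fun a _ => hw a).lt_of_ne fun h0 => h.ne' ?_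
  exact sum_mul_eq_zero_of_sum_eq_zero hw h0.symm _

theorem wcov_le_of_sum_eq_zero {w : ι → ℝ} (hw : ∀ a, 0 ≤ w a) (h : ∑ a, w a = 0) (F G : ι → ℝ)
    {c : ℝ} (hc : 0 ≤ c) : wcov w F G ≤ c :=
  (sum_mul_eq_zero_of_sum_eq_zero hw h _).trans_le hc

theorem sum_mul_mul_eq_wcov_add {w : ι → ℝ} (hw : ∀ a, 0 ≤ w a) (F G : ι → ℝ) :
    ∑ a, w a * (F a * G a) = wcov w F G + (∑ a, w a) * (wmean w F * wmean w G) := by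
  have hF := sum_mul_wmean hw F
  have hG := sum_mul_wmean hw G
  have expand : ∀ a, w a * ((F a - wmean w F) * (G a - wmean w G)) =
      w a * (F a * G a) - wmean w G * (w a * F a) - wmean w F * (w a * G a) +
        wmean w F * wmean w G * w a := fun a => by ring
  simp only [wcov, expand, sum_add_distrib, sum_sub_distrib, ← mul_sum, ← hF, ← hG]
  ring

theorem wcov_eq_sum_of_wmean_eq_zero {w : ι → ℝ} (hw : ∀ a, 0 ≤ w a) (F : ι → ℝ) {G : ι → ℝ}
    (hG : wmean w G = 0) : wcov w F G = ∑ a, w a * (F a * G a) := by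
  simp [sum_mul_mul_eq_wcov_add hw F G, hG]

theorem wcov_self_le {w : ι → ℝ} (hw : ∀ a, 0 ≤ w a) (F : ι → ℝ) :
    wcov w F F ≤ ∑ a, w a * F a ^ 2 := by
  have h := sum_mul_mul_eq_wcov_add hw F F
  simp only [← sq] at h
  rw [h, le_add_iff_nonneg_right]
  exact mul_nonneg (sum_nonneg fun a _ => hw a) (sq_nonneg _)

theorem sum_mul_standardize {w : ι → ℝ} (hw : ∀ a, 0 ≤ w a) {F : ι → ℝ}
    (hV : 0 < wcov w F F) :
    ∑ a, w a * ((F a - wmean w F) / √(wcov w F F / ∑ a, w a)) = 0 ∧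
      ∑ a, w a * ((F a - wmean w F) / √(wcov w F F / ∑ a, w a)) ^ 2 = ∑ a, w a := by
  have hW := sum_pos_of_wcov_pos hw hV
  simp only [div_pow, mul_div_assoc', ← sum_div, sum_mul_sub_wmean hw F, ← wcov_self,
    Real.sq_sqrt (div_nonneg hV.le hW.le)]
  constructor
  · simp
  · field_simp

theorem sum_mul_standardize_mul {w : ι → ℝ} (hw : ∀ a, 0 ≤ w a) {F G : ι → ℝ}
    (hVF : 0 < wcov w F F) (hVG : 0 < wcov w G G) :
    ∑ a, w a * ((F a - wmean w F) / √(wcov w F F / ∑ a, w a) *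
      ((G a - wmean w G) / √(wcov w G G / ∑ a, w a))) =
        (∑ a, w a) * (wcov w F G / (√(wcov w F F) * √(wcov w G G))) := by
  have hW := sum_pos_of_wcov_pos hw hVF
  have hterm : ∀ a, w a * ((F a - wmean w F) / √(wcov w F F / ∑ a, w a) *
      ((G a - wmean w G) / √(wcov w G G / ∑ a, w a))) =
        (∑ a, w a) / (√(wcov w F F) * √(wcov w G G)) *
          (w a * ((F a - wmean w F) * (G a - wmean w G))) := fun a => by
    rw [Real.sqrt_div hVF.le, Real.sqrt_div hVG.le]
    field_simp
    rw [Real.sq_sqrt hW.le]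
    ring
  rw [sum_congr rfl fun a _ => hterm a, ← mul_sum]
  change _ * wcov w F G = _
  ring

section Fibers

variable {w : ι → ℝ} {κ : ι → K}

theorem sum_fiberWeight_mul_congr {k : K} {F F' : ι → ℝ} (h : ∀ a, κ a = k → F a = F' a) :
    ∑ a, fiberWeight w κ k a * F a = ∑ a, fiberWeight w κ k a * F' a :=
  sum_congr rfl fun a _ => fiberWeight_mul_congr (h a)

theorem wcov_fiberWeight_congr {k : K} {F F' G G' : ι → ℝ} (hF : ∀ a, κ a = k → F a = F' a)
    (hG : ∀ a, κ a = k → G a = G' a) :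
    wcov (fiberWeight w κ k) F G = wcov (fiberWeight w κ k) F' G' := by
  have hmF : wmean (fiberWeight w κ k) F = wmean (fiberWeight w κ k) F' := by
    unfold wmean; rw [sum_fiberWeight_mul_congr hF]
  have hmG : wmean (fiberWeight w κ k) G = wmean (fiberWeight w κ k) G' := by
    unfold wmean; rw [sum_fiberWeight_mul_congr hG]
  unfold wcov
  rw [hmF, hmG]
  exact sum_fiberWeight_mul_congr fun a h => by rw [hF a h, hG a h]

variable [Fintype K]

theorem sum_sum_fiberWeight_mul (F : ι → ℝ) :
    ∑ k, ∑ a, fiberWeight w κ k a * F a = ∑ a, w a * F a := by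
  rw [sum_comm]
  refine sum_congr rfl fun a _ => ?_
  simp [fiberWeight, ite_mul]

theorem sum_mul_comp_mul (φ : K → ℝ) (G : ι → ℝ) :
    ∑ a, w a * (φ (κ a) * G a) = ∑ k, φ k * ∑ a, fiberWeight w κ k a * G a := by
  rw [← sum_sum_fiberWeight_mul (κ := κ)]
  refine sum_congr rfl fun k _ => ?_
  rw [mul_sum]
  exact sum_congr rfl fun a _ => by
    rw [fiberWeight_mul_congr (y := φ k * G a) fun h => by rw [h]]; ring

theorem sum_mul_comp_sq (φ : K → ℝ) :
    ∑ a, w a * φ (κ a) ^ 2 = ∑ k, (∑ a, fiberWeight w κ k a) * φ k ^ 2 := by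
  rw [← sum_sum_fiberWeight_mul (κ := κ)]
  refine sum_congr rfl fun k _ => ?_
  rw [sum_mul]
  exact sum_fiberWeight_mul_congr fun a h => by rw [h]

theorem sum_mul_wmean_fiber_mul (hw : ∀ a, 0 ≤ w a) (G : ι → ℝ) :
    ∑ a, w a * (wmean (fiberWeight w κ (κ a)) G * G a) =
      ∑ k, (∑ a, fiberWeight w κ k a) * wmean (fiberWeight w κ k) G ^ 2 := by
  rw [sum_mul_comp_mul (fun k => wmean (fiberWeight w κ k) G)]
  refine sum_congr rfl fun k _ => ?_
  rw [← sum_mul_wmean (fiberWeight_nonneg hw κ k)]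
  ring

/-- Law of total covariance. -/
theorem sum_mul_mul_eq_sum_wcov_add (hw : ∀ a, 0 ≤ w a) (F G : ι → ℝ) :
    ∑ a, w a * (F a * G a) =
      ∑ k, wcov (fiberWeight w κ k) F G +
        ∑ k, (∑ a, fiberWeight w κ k a) *
          (wmean (fiberWeight w κ k) F * wmean (fiberWeight w κ k) G) := by
  rw [← sum_sum_fiberWeight_mul (κ := κ), ← sum_add_distrib]
  exact sum_congr rfl fun k _ => sum_mul_mul_eq_wcov_add (fiberWeight_nonneg hw κ k) F G

theorem sum_wcov_fiber_le (hw : ∀ a, 0 ≤ w a) {F G : ι → ℝ} {σ : ℝ} (hσ0 : 0 ≤ σ)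
    (hfiber : ∀ k, 0 < ∑ a, fiberWeight w κ k a →
      wcov (fiberWeight w κ k) F G ≤
        σ * (√(wcov (fiberWeight w κ k) F F) * √(wcov (fiberWeight w κ k) G G))) :
    ∑ k, wcov (fiberWeight w κ k) F G ≤
      σ * (√(∑ k, wcov (fiberWeight w κ k) F F) * √(∑ k, wcov (fiberWeight w κ k) G G)) := by
  have hw' := fiberWeight_nonneg hw κ
  calc ∑ k, wcov (fiberWeight w κ k) F G
      ≤ ∑ k, σ * (√(wcov (fiberWeight w κ k) F F) * √(wcov (fiberWeight w κ k) G G)) := by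
        refine sum_le_sum fun k _ => ?_
        rcases (sum_nonneg fun a _ => hw' k a).eq_or_lt with h | h
        · exact wcov_le_of_sum_eq_zero (hw' k) h.symm F G (by positivity)
        · exact hfiber k h
    _ ≤ σ * (√(∑ k, wcov (fiberWeight w κ k) F F) * √(∑ k, wcov (fiberWeight w κ k) G G)) := by
        rw [← mul_sum]
        exact mul_le_mul_of_nonneg_left (Real.sum_sqrt_mul_sqrt_le _
          (fun k => wcov_self_nonneg (hw' k) F) fun k => wcov_self_nonneg (hw' k) G) hσ0

theorem sum_mul_mul_le_of_fiberwise (hw : ∀ a, 0 ≤ w a) {F G : ι → ℝ} {σ s : ℝ}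
    (hσ0 : 0 ≤ σ) (hσ1 : σ ≤ 1) (hF : ∑ a, w a * F a ^ 2 = 1) (hG : ∑ a, w a * G a ^ 2 = 1)
    (hfiber : ∀ k, 0 < ∑ a, fiberWeight w κ k a →
      wcov (fiberWeight w κ k) F G ≤
        σ * (√(wcov (fiberWeight w κ k) F F) * √(wcov (fiberWeight w κ k) G G)))
    (hmean : ∑ k, (∑ a, fiberWeight w κ k a) * wmean (fiberWeight w κ k) G ^ 2 ≤ s ^ 2) :
    ∑ a, w a * (F a * G a) ≤ √(1 - (1 - σ ^ 2) * (1 - s ^ 2)) := by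
  set W := fun k => ∑ a, fiberWeight w κ k a
  set mF := fun k => wmean (fiberWeight w κ k) F
  set mG := fun k => wmean (fiberWeight w κ k) G
  have hw' := fiberWeight_nonneg hw κ
  have hW : ∀ k, 0 ≤ W k := fun k => sum_nonneg fun a _ => hw' k a
  have hVF := sum_mul_mul_eq_sum_wcov_add (κ := κ) hw F F
  have hVG := sum_mul_mul_eq_sum_wcov_add (κ := κ) hw G G
  simp only [← sq, hF, hG] at hVF hVG
  have hVF0 : 0 ≤ ∑ k, wcov (fiberWeight w κ k) F F :=
    sum_nonneg fun k _ => wcov_self_nonneg (hw' k) F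
  have hVG0 : 0 ≤ ∑ k, wcov (fiberWeight w κ k) G G :=
    sum_nonneg fun k _ => wcov_self_nonneg (hw' k) G
  have ha0 : 0 ≤ ∑ k, W k * mF k ^ 2 := sum_nonneg fun k _ => mul_nonneg (hW k) (sq_nonneg _)
  have hb0 : 0 ≤ ∑ k, W k * mG k ^ 2 := sum_nonneg fun k _ => mul_nonneg (hW k) (sq_nonneg _)
  have hcov := sum_wcov_fiber_le hw hσ0 hfiber
  rw [show ∑ k, wcov (fiberWeight w κ k) F F = 1 - ∑ k, W k * mF k ^ 2 by linarith,
    show ∑ k, wcov (fiberWeight w κ k) G G = 1 - ∑ k, W k * mG k ^ 2 by linarith] at hcov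
  rw [sum_mul_mul_eq_sum_wcov_add (κ := κ) hw F G]
  linarith [sum_mul_mul_le_sqrt_mul_sqrt hW mF mG,
    sqrt_mul_sqrt_add_mul_le ha0 (by linarith) hb0 (by linarith) hσ0 hσ1 hmean]

end Fibers

end WeightedSums

section Sigma2

variable {A B : Type*} [Fintype A] [Fintype B] {μA : A → ℝ} {μB : B → ℝ} {M : A → B → ℝ}

theorem sigma2_nonneg : 0 ≤ sigma2 μA μB M := by
  unfold sigma2
  set R := { r : ℝ | ∃ f : A → ℝ, ∃ g : B → ℝ,
    (∑ a, μA a * f a) = 0 ∧ (∑ b, μB b * g b) = 0 ∧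
    (∑ a, μA a * f a ^ 2) = 1 ∧ (∑ b, μB b * g b ^ 2) = 1 ∧
    r = ∑ a, μA a * f a * ∑ b, M a b * g b }
  rcases R.eq_empty_or_nonempty with hR | ⟨r, f, g, hf0, hg0, hf2, hg2, rfl⟩
  · rw [hR, Real.sSup_empty]
  by_cases hbdd : BddAbove R
  · -- `R` is symmetric under `f ↦ -f`
    have hneg : -∑ a, μA a * f a * ∑ b, M a b * g b ∈ R :=
      ⟨fun a => -f a, g, by simp [hf0], hg0, by simp [hf2], hg2, by simp⟩
    linarith [le_csSup hbdd hneg, le_csSup hbdd ⟨f, g, hf0, hg0, hf2, hg2, rfl⟩]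
  · rw [Real.sSup_of_not_bddAbove hbdd]

def Sigma2UpperBound (μA : A → ℝ) (μB : B → ℝ) (M : A → B → ℝ) (c : ℝ) : Prop :=
  ∀ (f : A → ℝ) (g : B → ℝ), (∑ a, μA a * f a) = 0 → (∑ b, μB b * g b) = 0 →
    (∑ a, μA a * f a ^ 2) = 1 → (∑ b, μB b * g b ^ 2) = 1 →
    ∑ a, μA a * f a * ∑ b, M a b * g b ≤ c

theorem sigma2_le {c : ℝ} (h : Sigma2UpperBound μA μB M c) (hc : 0 ≤ c) :
    sigma2 μA μB M ≤ c :=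
  Real.sSup_le (by rintro _ ⟨f, g, hf0, hg0, hf2, hg2, rfl⟩; exact h f g hf0 hg0 hf2 hg2) hc

theorem le_sigma2 {c : ℝ} (h : Sigma2UpperBound μA μB M c) {f : A → ℝ} {g : B → ℝ}
    (hf0 : ∑ a, μA a * f a = 0) (hg0 : ∑ b, μB b * g b = 0) (hf2 : ∑ a, μA a * f a ^ 2 = 1)
    (hg2 : ∑ b, μB b * g b ^ 2 = 1) :
    ∑ a, μA a * f a * ∑ b, M a b * g b ≤ sigma2 μA μB M :=
  le_csSup ⟨c, by rintro _ ⟨f, g, hf0, hg0, hf2, hg2, rfl⟩; exact h f g hf0 hg0 hf2 hg2⟩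
    ⟨f, g, hf0, hg0, hf2, hg2, rfl⟩

end Sigma2

section Pinned

variable (X : WPC n U)

theorem pr_nonneg (E : (∀ i, U i) → Prop) : 0 ≤ pr X E :=
  sum_nonneg fun ω _ => by split_ifs <;> simp [X.nonneg ω]

theorem pr_mono {E F : (∀ i, U i) → Prop} (h : ∀ ω, E ω → F ω) : pr X E ≤ pr X F :=
  sum_le_sum fun ω _ => by
    by_cases hE : E ω
    · simp [hE, h ω hE]
    · by_cases hF : F ω <;> simp [hE, hF, X.nonneg ω]

theorem sum_pr_and_restr_mul (E : (∀ i, U i) → Prop) {T : Finset (Fin n)}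
    (φ : PAssign U T → ℝ) :
    ∑ τ, pr X (fun ω => E ω ∧ restr T ω = τ) * φ τ =
      ∑ ω, (if E ω then X.π ω else 0) * φ (restr T ω) := by
  simp only [pr, sum_mul]
  rw [sum_comm]
  refine sum_congr rfl fun ω _ => ?_
  by_cases hE : E ω <;> simp [hE, ite_mul]

theorem sum_sum_pr_and_restr_mul (E : (∀ i, U i) → Prop) {I J : Finset (Fin n)}
    (φ : PAssign U I → PAssign U J → ℝ) :
    ∑ τI, ∑ τJ, pr X (fun ω => E ω ∧ restr I ω = τI ∧ restr J ω = τJ) * φ τI τJ =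
      ∑ ω, (if E ω then X.π ω else 0) * φ (restr I ω) (restr J ω) := by
  simp only [pr, sum_mul]
  conv_lhs => enter [2, τI]; rw [sum_comm]
  rw [sum_comm]
  refine sum_congr rfl fun ω _ => ?_
  by_cases hE : E ω <;> simp [hE, ite_mul, ite_and]

theorem marg_eq_sum_fiberWeight {S : Finset (Fin n)} (α : PAssign U S) :
    marg X S α = ∑ ω, fiberWeight X.π (restr S) α ω := rfl

theorem fiberWeight_restr_empty (α : PAssign U (∅ : Finset (Fin n))) :
    fiberWeight X.π (restr ∅) α = X.π :=
  funext fun _ => if_pos (funext fun j => absurd j.2 (notMem_empty j.1))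

theorem marg_empty (α : PAssign U (∅ : Finset (Fin n))) : marg X ∅ α = 1 := by
  rw [marg_eq_sum_fiberWeight, fiberWeight_restr_empty, X.sum_one]

theorem sum_cmarg_mul {S T : Finset (Fin n)} (α : PAssign U S) (φ : PAssign U T → ℝ) :
    ∑ τ, cmarg X α τ * φ τ =
      (∑ ω, fiberWeight X.π (restr S) α ω * φ (restr T ω)) / marg X S α := by
  simp only [cmarg, div_mul_eq_mul_div, ← sum_div, sum_pr_and_restr_mul]
  rfl

theorem cmarg_mul_Cwalk {S I J : Finset (Fin n)} (α : PAssign U S) (τI : PAssign U I)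
    (τJ : PAssign U J) :
    cmarg X α τI * Cwalk X S I J α τI τJ =
      pr X (fun ω => restr S ω = α ∧ restr I ω = τI ∧ restr J ω = τJ) / marg X S α := by
  unfold cmarg Cwalk
  rcases (pr_nonneg X _).eq_or_lt with hp | hp
  · have h0 : pr X (fun ω => restr S ω = α ∧ restr I ω = τI ∧ restr J ω = τJ) = 0 :=
      le_antisymm ((pr_mono X (F := fun ω => restr S ω = α ∧ restr I ω = τI)
        fun ω h => ⟨h.1, h.2.1⟩).trans_eq hp.symm) (pr_nonneg X _)
    rw [← hp, h0]; simp
  · field_simp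

theorem sum_cmarg_mul_sum_Cwalk {S I J : Finset (Fin n)} (α : PAssign U S)
    (f : PAssign U I → ℝ) (g : PAssign U J → ℝ) :
    ∑ τI, cmarg X α τI * f τI * ∑ τJ, Cwalk X S I J α τI τJ * g τJ =
      (∑ ω, fiberWeight X.π (restr S) α ω * (f (restr I ω) * g (restr J ω))) / marg X S α := by
  calc ∑ τI, cmarg X α τI * f τI * ∑ τJ, Cwalk X S I J α τI τJ * g τJ
      = ∑ τI, ∑ τJ, cmarg X α τI * Cwalk X S I J α τI τJ * (f τI * g τJ) :=
        sum_congr rfl fun τI _ => by rw [mul_sum]; exact sum_congr rfl fun τJ _ => by ring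
    _ = (∑ τI, ∑ τJ, pr X (fun ω => restr S ω = α ∧ restr I ω = τI ∧ restr J ω = τJ) *
          (f τI * g τJ)) / marg X S α := by
        simp only [cmarg_mul_Cwalk, div_mul_eq_mul_div, sum_div]
    _ = _ := by rw [sum_sum_pr_and_restr_mul X (fun ω => restr S ω = α)]; rfl

end Pinned

section Sigma2C

variable (X : WPC n U)

theorem sigma2C_upperBound_one (S I J : Finset (Fin n)) (α : PAssign U S) :
    Sigma2UpperBound (fun τ : PAssign U I => cmarg X α τ) (fun τ : PAssign U J => cmarg X α τ)
      (Cwalk X S I J α) 1 := by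
  intro f g _ _ hf2 hg2
  rw [sum_cmarg_mul] at hf2 hg2
  rw [sum_cmarg_mul_sum_Cwalk]
  have hm : marg X S α ≠ 0 := by rintro h; rw [h, div_zero] at hf2; exact zero_ne_one hf2
  have hpos : 0 < marg X S α := (pr_nonneg X _).lt_of_ne hm.symm
  rw [div_eq_one_iff_eq hm] at hf2 hg2
  rw [div_le_one hpos]
  calc _ ≤ _ := sum_mul_mul_le_sqrt_mul_sqrt (fiberWeight_nonneg X.nonneg _ _) _ _
    _ = marg X S α := by rw [hf2, hg2, Real.mul_self_sqrt hpos.le]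

theorem sigma2C_le_one (S I J : Finset (Fin n)) (α : PAssign U S) : sigma2C X S I J α ≤ 1 :=
  sigma2_le (sigma2C_upperBound_one X S I J α) zero_le_one

theorem sigma2C_nonneg (S I J : Finset (Fin n)) (α : PAssign U S) : 0 ≤ sigma2C X S I J α :=
  sigma2_nonneg

theorem wcov_le_sigma2C {S I J : Finset (Fin n)} (α : PAssign U S) (f : PAssign U I → ℝ)
    (g : PAssign U J → ℝ) :
    let w := fiberWeight X.π (restr S) α
    wcov w (fun ω => f (restr I ω)) (fun ω => g (restr J ω)) ≤
      sigma2C X S I J α * (√(wcov w (fun ω => f (restr I ω)) (fun ω => f (restr I ω))) *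
        √(wcov w (fun ω => g (restr J ω)) (fun ω => g (restr J ω)))) := by
  intro w
  set F := fun ω => f (restr I ω)
  set G := fun ω => g (restr J ω)
  have hw : ∀ ω, 0 ≤ w ω := fiberWeight_nonneg X.nonneg _ _
  have hcs : wcov w F G ≤ √(wcov w F F) * √(wcov w G G) := by
    rw [wcov_self, wcov_self]
    exact sum_mul_mul_le_sqrt_mul_sqrt hw (fun ω => F ω - wmean w F) fun ω => G ω - wmean w G
  rcases (wcov_self_nonneg hw F).eq_or_lt with hVF | hVF
  · rw [← hVF] at hcs ⊢; simpa using hcs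
  rcases (wcov_self_nonneg hw G).eq_or_lt with hVG | hVG
  · rw [← hVG] at hcs ⊢; simpa using hcs
  have hm : 0 < marg X S α := sum_pos_of_wcov_pos hw hVF
  obtain ⟨hF0, hF2⟩ := sum_mul_standardize hw hVF
  obtain ⟨hG0, hG2⟩ := sum_mul_standardize hw hVG
  have key := le_sigma2 (sigma2C_upperBound_one X S I J α)
    (f := fun τ => (f τ - wmean w F) / √(wcov w F F / marg X S α))
    (g := fun τ => (g τ - wmean w G) / √(wcov w G G / marg X S α))
    (by rw [sum_cmarg_mul]; exact div_eq_zero_iff.2 (Or.inl hF0))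
    (by rw [sum_cmarg_mul]; exact div_eq_zero_iff.2 (Or.inl hG0))
    (by rw [sum_cmarg_mul]; exact div_eq_one_iff_eq hm.ne' |>.2 hF2)
    (by rw [sum_cmarg_mul]; exact div_eq_one_iff_eq hm.ne' |>.2 hG2)
  rw [sum_cmarg_mul_sum_Cwalk, marg_eq_sum_fiberWeight, sum_mul_standardize_mul hw hVF hVG,
    mul_div_cancel_left₀ _ (show ∑ ω, w ω ≠ 0 from hm.ne'), div_le_iff₀ (by positivity)] at key
  exact key

end Sigma2C

section Recursion

variable (X : WPC n U)

theorem sum_fiberWeight_mul_wmean_sq_le (α : PAssign U (∅ : Finset (Fin n)))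
    {T J : Finset (Fin n)} (g : PAssign U J → ℝ) (hg0 : ∑ ω, X.π ω * g (restr J ω) = 0)
    (hg2 : ∑ ω, X.π ω * g (restr J ω) ^ 2 = 1) :
    ∑ x, (∑ ω, fiberWeight X.π (restr T) x ω) *
        wmean (fiberWeight X.π (restr T) x) (fun ω => g (restr J ω)) ^ 2 ≤
      sigma2C X ∅ T J α ^ 2 := by
  set G := fun ω => g (restr J ω)
  set M := fun ω => wmean (fiberWeight X.π (restr T) (restr T ω)) G
  set b := ∑ x, (∑ ω, fiberWeight X.π (restr T) x ω) *
    wmean (fiberWeight X.π (restr T) x) G ^ 2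
  have key := wcov_le_sigma2C X α (fun x => wmean (fiberWeight X.π (restr T) x) G) g
  simp only [fiberWeight_restr_empty] at key
  have hMG : wcov X.π M G = b := by
    rw [wcov_eq_sum_of_wmean_eq_zero X.nonneg M (wmean_eq_zero hg0)]
    exact sum_mul_wmean_fiber_mul X.nonneg G
  have hMM : wcov X.π M M ≤ b := (wcov_self_le X.nonneg M).trans_eq
    (sum_mul_comp_sq (κ := restr T) fun x => wmean (fiberWeight X.π (restr T) x) G)
  have hGG : wcov X.π G G ≤ 1 := (wcov_self_le X.nonneg G).trans_eq hg2
  have hs := sigma2C_nonneg X ∅ T J α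
  have hb : b ≤ sigma2C X ∅ T J α * √b := by
    calc b = wcov X.π M G := hMG.symm
      _ ≤ sigma2C X ∅ T J α * (√(wcov X.π M M) * √(wcov X.π G G)) := key
      _ ≤ sigma2C X ∅ T J α * (√b * 1) := by
          gcongr
          exact Real.sqrt_le_one.2 hGG
      _ = sigma2C X ∅ T J α * √b := by rw [mul_one]
  have hb0 : 0 ≤ b := sum_nonneg fun x _ =>
    mul_nonneg (sum_nonneg fun ω _ => fiberWeight_nonneg X.nonneg _ _ _) (sq_nonneg _)
  have hsq := Real.sq_sqrt hb0
  nlinarith [Real.sqrt_nonneg b]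

def extendAt {I : Finset (Fin n)} {i : Fin n} (x : PAssign U {i}) (τ : PAssign U (I.erase i)) :
    PAssign U I :=
  fun k => if hk : k.1 = i then x ⟨k.1, mem_singleton.2 hk⟩ else τ ⟨k.1, mem_erase.2 ⟨hk, k.2⟩⟩

set_option linter.unusedSectionVars false in
theorem extendAt_restr {I : Finset (Fin n)} {i : Fin n} {x : PAssign U {i}} {ω : ∀ i, U i}
    (h : restr {i} ω = x) : extendAt x (restr (I.erase i) ω) = restr I ω := by
  funext k
  unfold extendAt
  split_ifs with hk
  · rw [← h]; rfl
  · rfl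

theorem wcov_le_of_sigma2C_pinned_le {I J : Finset (Fin n)} {i : Fin n} {σ : ℝ}
    (x : PAssign U {i}) (hx : sigma2C X {i} (I.erase i) J x ≤ σ) (f : PAssign U I → ℝ)
    (g : PAssign U J → ℝ) :
    wcov (fiberWeight X.π (restr {i}) x) (fun ω => f (restr I ω)) (fun ω => g (restr J ω)) ≤
      σ * (√(wcov (fiberWeight X.π (restr {i}) x) (fun ω => f (restr I ω))
          (fun ω => f (restr I ω))) *
        √(wcov (fiberWeight X.π (restr {i}) x) (fun ω => g (restr J ω))
          (fun ω => g (restr J ω)))) := by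
  have hF : ∀ ω, restr {i} ω = x → f (restr I ω) = f (extendAt x (restr (I.erase i) ω)) :=
    fun ω h => by rw [extendAt_restr h]
  rw [wcov_fiberWeight_congr hF fun _ _ => rfl, wcov_fiberWeight_congr hF hF]
  exact (wcov_le_sigma2C X x (fun τ => f (extendAt x τ)) g).trans
    (mul_le_mul_of_nonneg_right hx (by positivity))

theorem sigma2C_upperBound_of_pinned {I J : Finset (Fin n)} {i : Fin n} {σ : ℝ} (hσ0 : 0 ≤ σ)
    (hσ1 : σ ≤ 1) (hσx : ∀ x : PAssign U {i}, 0 < marg X {i} x →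
      sigma2C X {i} (I.erase i) J x ≤ σ) (α : PAssign U (∅ : Finset (Fin n))) :
    Sigma2UpperBound (fun τ : PAssign U I => cmarg X α τ) (fun τ : PAssign U J => cmarg X α τ)
      (Cwalk X ∅ I J α) √(1 - (1 - σ ^ 2) * (1 - sigma2C X ∅ {i} J α ^ 2)) := by
  intro f g _ hg0 hf2 hg2
  simp only [sum_cmarg_mul, sum_cmarg_mul_sum_Cwalk, marg_empty, div_one,
    fiberWeight_restr_empty] at hg0 hf2 hg2 ⊢
  exact sum_mul_mul_le_of_fiberwise (κ := restr {i}) X.nonneg hσ0 hσ1 hf2 hg2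
    (fun x hx => wcov_le_of_sigma2C_pinned_le X x (hσx x hx) f g)
    (sum_fiberWeight_mul_wmean_sq_le X α g hg0 hg2)

end Recursion

theorem sigma2C_recursion_general
    (X : WPC n U) (I J : Finset (Fin n)) (i : Fin n) (σ : ℝ)
    (hσ : σ = sSup { r : ℝ | ∃ x : PAssign U {i}, 0 < marg X {i} x ∧
      r = sigma2C X {i} (I.erase i) J x })
    (α : PAssign U (∅ : Finset (Fin n))) :
    sigma2C X ∅ I J α ^ 2 ≤ 1 - (1 - σ ^ 2) * (1 - sigma2C X ∅ {i} J α ^ 2) := by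
  have hσx : ∀ x : PAssign U {i}, 0 < marg X {i} x → sigma2C X {i} (I.erase i) J x ≤ σ :=
    fun x hx => hσ ▸ le_csSup ⟨1, by rintro _ ⟨y, -, rfl⟩; exact sigma2C_le_one X _ _ _ y⟩
      ⟨x, hx, rfl⟩
  have hσ0 : 0 ≤ σ :=
    hσ ▸ Real.sSup_nonneg (by rintro _ ⟨y, -, rfl⟩; exact sigma2C_nonneg X _ _ _ y)
  have hσ1 : σ ≤ 1 :=
    hσ ▸ Real.sSup_le (by rintro _ ⟨y, -, rfl⟩; exact sigma2C_le_one X _ _ _ y) zero_le_one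
  have hs0 := sigma2C_nonneg X ∅ {i} J α
  have hs1 := sigma2C_le_one X ∅ {i} J α
  have hprod : (1 - σ ^ 2) * (1 - sigma2C X ∅ {i} J α ^ 2) ≤ 1 :=
    mul_le_one₀ (by nlinarith) (by nlinarith) (by nlinarith)
  calc sigma2C X ∅ I J α ^ 2
      ≤ √(1 - (1 - σ ^ 2) * (1 - sigma2C X ∅ {i} J α ^ 2)) ^ 2 :=
        pow_le_pow_left₀ (sigma2C_nonneg X ∅ I J α)
          (sigma2_le (sigma2C_upperBound_of_pinned X hσ0 hσ1 hσx α) (Real.sqrt_nonneg _)) 2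
    _ = 1 - (1 - σ ^ 2) * (1 - sigma2C X ∅ {i} J α ^ 2) := Real.sq_sqrt (by linarith)

theorem sigma2C_recursion
    (X : WPC n U) (I J : Finset (Fin n)) (hIJ : Disjoint I J)
    (hUnion : I ∪ J = Finset.univ) (hI : 2 ≤ I.card) (i : Fin n) (hi : i ∈ I)
    (σ : ℝ)
    (hσ : σ = sSup { r : ℝ | ∃ x : PAssign U {i}, 0 < marg X {i} x ∧
      r = sigma2C X {i} (I.erase i) J x })
    (α : PAssign U (∅ : Finset (Fin n))) :
    sigma2C X ∅ I J α ^ 2 ≤ 1 - (1 - σ ^ 2) * (1 - sigma2C X ∅ {i} J α ^ 2) :=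
  sigma2C_recursion_general X I J i σ hσ α

end PaperFormal
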